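/- arXiv:2207.03313 — 4 statements merged into one kernel-verified Lean document; each statement's English description precedes it below -/
import Mathlib

section
/- Let a > 0 and let (aₙ)_{n>0} be a finitely supported sequence of complex numbers. Then g(t,x,y) := Σ_{n>0} aₙ e^{i n y - n x²/2 - n t} is a (classical) solution of the Baouendi–Grushin equation ∂_t g - ∂_x² g - x² ∂_y² g = 0 on (0,∞) × ℝ × 𝕋. -/
/-!
Each summand is `e^{-nt} e^{iny} e^{-nx²/2}`, where `e^{-nx²/2}` is the ground state of the
harmonic oscillator `-∂ₓ² + n²x²` with eigenvalue `n`: in the Grushin operator, `∂_y²` turns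
into `-n²`, and then `-∂ₓ² + n²x²` cancels against `∂_t = -n`. The operator is linear on
finite sums of smooth functions. Every partial derivative that occurs is that of the exponential
of a quadratic polynomial in one real variable.
-/

open Complex

section QuadraticExponential

variable (α β γ : ℂ)

theorem contDiff_cexp_quadratic {n : WithTop ℕ∞} :
    ContDiff ℝ n (fun u : ℝ => exp (α + β * u + γ * u ^ 2)) := by
  have : ContDiff ℝ n (fun u : ℝ => (u : ℂ)) := ofRealCLM.contDiff
  fun_prop

theorem hasDerivAt_cexp_quadratic (u : ℝ) :
    HasDerivAt (fun u : ℝ => exp (α + β * u + γ * u ^ 2))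
      ((β + 2 * γ * u) * exp (α + β * u + γ * u ^ 2)) u := by
  have hpoly : HasDerivAt (fun z : ℂ => α + β * z + γ * z ^ 2) (β + 2 * γ * u) u := by
    refine (((hasDerivAt_id (u : ℂ)).const_mul β |>.const_add α).fun_add
      ((hasDerivAt_pow 2 (u : ℂ)).const_mul γ)).congr_deriv ?_
    push_cast; ring
  simpa only [mul_comm] using hpoly.cexp.comp_ofReal

theorem deriv_cexp_quadratic :
    deriv (fun u : ℝ => exp (α + β * u + γ * u ^ 2)) =
      fun u : ℝ => (β + 2 * γ * u) * exp (α + β * u + γ * u ^ 2) :=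
  funext fun u => (hasDerivAt_cexp_quadratic α β γ u).deriv

theorem iteratedDeriv_two_cexp_quadratic (u : ℝ) :
    iteratedDeriv 2 (fun u : ℝ => exp (α + β * u + γ * u ^ 2)) u =
      ((β + 2 * γ * u) ^ 2 + 2 * γ) * exp (α + β * u + γ * u ^ 2) := by
  rw [iteratedDeriv_succ, iteratedDeriv_one, deriv_cexp_quadratic]
  have hlin : HasDerivAt (fun u : ℝ => β + 2 * γ * u) (2 * γ) u := by
    simpa using (((hasDerivAt_id (u : ℂ)).const_mul (2 * γ)).const_add β).comp_ofReal
  rw [(hlin.fun_mul (hasDerivAt_cexp_quadratic α β γ u)).deriv]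
  ring

end QuadraticExponential

noncomputable def grushinOp (g : ℝ → ℝ → ℝ → ℂ) (t x y : ℝ) : ℂ :=
  deriv (fun s => g s x y) t - iteratedDeriv 2 (fun u => g t u y) x
    - (x : ℂ) ^ 2 * iteratedDeriv 2 (fun v => g t x v) y

theorem grushinOp_finset_sum {ι : Type*} (s : Finset ι) (c : ι → ℂ) (g : ι → ℝ → ℝ → ℝ → ℂ)
    {t x y : ℝ} (ht : ∀ i ∈ s, DifferentiableAt ℝ (fun s => g i s x y) t)
    (hx : ∀ i ∈ s, ContDiffAt ℝ 2 (fun u => g i t u y) x)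
    (hy : ∀ i ∈ s, ContDiffAt ℝ 2 (fun v => g i t x v) y) :
    grushinOp (fun t x y => ∑ i ∈ s, c i * g i t x y) t x y =
      ∑ i ∈ s, c i * grushinOp (g i) t x y := by
  unfold grushinOp
  beta_reduce
  rw [deriv_fun_sum fun i hi => (ht i hi).const_mul (c i),
    iteratedDeriv_fun_sum fun i hi => contDiffAt_const.mul (hx i hi),
    iteratedDeriv_fun_sum fun i hi => contDiffAt_const.mul (hy i hi), Finset.mul_sum,
    ← Finset.sum_sub_distrib, ← Finset.sum_sub_distrib]
  refine Finset.sum_congr rfl fun i hi => ?_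
  rw [deriv_const_mul _ (ht i hi), iteratedDeriv_const_mul _ (hx i hi),
    iteratedDeriv_const_mul _ (hy i hi)]
  ring

noncomputable def grushinMode (ν : ℂ) (t x y : ℝ) : ℂ :=
  exp (I * ν * y - ν * x ^ 2 / 2 - ν * t)

section GrushinMode

variable (ν : ℂ) (t x y : ℝ)

theorem grushinMode_fun_t :
    (fun s => grushinMode ν s x y) =
      fun s : ℝ => exp ((I * ν * y - ν * x ^ 2 / 2) + -ν * s + 0 * s ^ 2) := by
  funext s; unfold grushinMode; congr 1; ring

theorem grushinMode_fun_x :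
    (fun u => grushinMode ν t u y) =
      fun u : ℝ => exp ((I * ν * y - ν * t) + 0 * u + -(ν / 2) * u ^ 2) := by
  funext u; unfold grushinMode; congr 1; ring

theorem grushinMode_fun_y :
    (fun v => grushinMode ν t x v) =
      fun v : ℝ => exp ((-(ν * x ^ 2 / 2) - ν * t) + I * ν * v + 0 * v ^ 2) := by
  funext v; unfold grushinMode; congr 1; ring

theorem contDiff_grushinMode_x {n : WithTop ℕ∞} :
    ContDiff ℝ n (fun u => grushinMode ν t u y) := by
  rw [grushinMode_fun_x]; exact contDiff_cexp_quadratic _ _ _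

theorem contDiff_grushinMode_y {n : WithTop ℕ∞} :
    ContDiff ℝ n (fun v => grushinMode ν t x v) := by
  rw [grushinMode_fun_y]; exact contDiff_cexp_quadratic _ _ _

theorem hasDerivAt_grushinMode_t :
    HasDerivAt (fun s => grushinMode ν s x y) (-ν * grushinMode ν t x y) t := by
  rw [grushinMode_fun_t]
  convert hasDerivAt_cexp_quadratic _ _ _ t using 1
  unfold grushinMode; congr 1 <;> ring_nf

theorem iteratedDeriv_two_grushinMode_x :
    iteratedDeriv 2 (fun u => grushinMode ν t u y) x =
      (ν ^ 2 * x ^ 2 - ν) * grushinMode ν t x y := by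
  rw [grushinMode_fun_x, iteratedDeriv_two_cexp_quadratic]
  unfold grushinMode; congr 1 <;> ring_nf

theorem iteratedDeriv_two_grushinMode_y :
    iteratedDeriv 2 (fun v => grushinMode ν t x v) y = -ν ^ 2 * grushinMode ν t x y := by
  rw [grushinMode_fun_y, iteratedDeriv_two_cexp_quadratic]
  unfold grushinMode; congr 1
  · linear_combination ν ^ 2 * I_sq
  · ring_nf

theorem grushinOp_grushinMode : grushinOp (grushinMode ν) t x y = 0 := by
  rw [grushinOp, (hasDerivAt_grushinMode_t ν t x y).deriv, iteratedDeriv_two_grushinMode_x,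
    iteratedDeriv_two_grushinMode_y]
  ring

end GrushinMode

theorem stmt4_general (c : ℕ → ℂ)
    (hc : (Function.support c).Finite)
    (g : ℝ → ℝ → ℝ → ℂ)
    (hg : ∀ t x y : ℝ, g t x y =
      ∑' n : ℕ, c n * Complex.exp
        (Complex.I * (n : ℂ) * (y : ℂ) - (n : ℂ) * (x : ℂ) ^ 2 / 2 - (n : ℂ) * (t : ℂ))) :
    ∀ t x y : ℝ, 0 < t →
      deriv (fun s => g s x y) t - iteratedDeriv 2 (fun u => g t u y) x
        - (x : ℂ) ^ 2 * iteratedDeriv 2 (fun v => g t x v) y = 0 := by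
  intro t x y _
  have hg_sum : g = fun t x y => ∑ n ∈ hc.toFinset, c n * grushinMode n t x y := by
    funext t x y
    rw [hg]
    exact tsum_eq_sum fun n hn => by simp [Function.notMem_support.mp (by simpa using hn)]
  change grushinOp g t x y = 0
  rw [hg_sum, grushinOp_finset_sum _ c (fun n : ℕ => grushinMode n)
    (fun n _ => (hasDerivAt_grushinMode_t n t x y).differentiableAt)
    (fun n _ => (contDiff_grushinMode_x n t y).contDiffAt)
    (fun n _ => (contDiff_grushinMode_y n t x).contDiffAt)]
  simp [grushinOp_grushinMode]

/-- Let `a > 0` and let `(cₙ)_{n>0}` be a finitely supported sequence of complex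
numbers. Then `g(t,x,y) = Σ_{n>0} cₙ e^{i n y - n x²/2 - n t}` is a classical
solution of the Baouendi–Grushin equation `∂_t g - ∂_x² g - x² ∂_y² g = 0`
on `(0,∞) × ℝ × 𝕋` (periodicity in `y` being automatic). -/
theorem stmt4 (a : ℝ) (ha : 0 < a) (c : ℕ → ℂ)
    (hc : (Function.support c).Finite) (hc0 : c 0 = 0)
    (g : ℝ → ℝ → ℝ → ℂ)
    (hg : ∀ t x y : ℝ, g t x y =
      ∑' n : ℕ, c n * Complex.exp
        (Complex.I * (n : ℂ) * (y : ℂ) - (n : ℂ) * (x : ℂ) ^ 2 / 2 - (n : ℂ) * (t : ℂ))) :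
    ∀ t x y : ℝ, 0 < t →
      deriv (fun s => g s x y) t - iteratedDeriv 2 (fun u => g t u y) x
        - (x : ℂ) ^ 2 * iteratedDeriv 2 (fun v => g t x v) y = 0 :=
  stmt4_general c hc g hg
end

section
/- Let ν ∈ ℂ with Re(ν) > 0 and write θ = arg(ν). Let I ⊂ ℝ be a bounded open interval, q : I → ℝ continuous, λ ∈ ℂ, and φ ∈ H²(I) ∩ H¹₀(I) satisfy −φ'' + ν² q(x)² φ = λ φ on I. Let κ ∈ C²(I;ℝ) and set w := e^{νκ} φ and μ := Re(e^{−iθ}λ)/cos(θ). Then the Agmon equality holds: ‖w'‖²_{L²(I)} + ∫_I (|ν|²(q(x)² − κ'(x)²) − μ) |w(x)|² dx = 0. -/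
/-!
Put `e = exp (-i arg ν)`, so that `e ν = ‖ν‖` is real and `Re e = cos (arg ν) > 0`. Conjugating
the equation by `exp (ν κ)` shows that `w` solves
`w'' = ν κ'' w + 2 ν κ' w' + (ν² (q² - κ'²) - λ) w`. Multiplying by `e w̄` and taking real parts,
the first-order terms become `‖ν‖ (κ' ‖w‖²)'`, so the flux `Re (e w' w̄) - ‖ν‖ κ' ‖w‖²` has
derivative `cos (arg ν) (‖w'‖² + (‖ν‖² (q² - κ'²) - μ) ‖w‖²)`. The flux vanishes at both
endpoints together with `w`, so the integral of this derivative is zero.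
-/

open MeasureTheory Set Complex
open scoped ComplexConjugate

theorem ContDiffOn.hasDerivAt_Icc {E : Type*} [NormedAddCommGroup E] [NormedSpace ℝ E]
    {f : ℝ → E} {a b x : ℝ} {n : WithTop ℕ∞} (hf : ContDiffOn ℝ n f (Icc a b)) (hn : n ≠ 0)
    (hx : x ∈ Ioo a b) : HasDerivAt f (derivWithin f (Icc a b) x) x := by
  have hIcc : Icc a b ∈ nhds x := Icc_mem_nhds hx.1 hx.2
  rw [derivWithin_of_mem_nhds hIcc]
  exact ((hf.contDiffAt hIcc).differentiableAt hn).hasDerivAt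

theorem ContDiffOn.hasDerivAt_derivWithin_Icc {E : Type*} [NormedAddCommGroup E]
    [NormedSpace ℝ E] {f : ℝ → E} {a b x : ℝ} (hf : ContDiffOn ℝ 2 f (Icc a b))
    (hx : x ∈ Ioo a b) : HasDerivAt (derivWithin f (Icc a b)) (iteratedDeriv 2 f x) x := by
  have hderiv : derivWithin f (Icc a b) =ᶠ[nhds x] deriv f := by
    filter_upwards [Ioo_mem_nhds hx.1 hx.2] with y hy
    exact derivWithin_of_mem_nhds (Icc_mem_nhds hy.1 hy.2)
  have hf' : DifferentiableAt ℝ (deriv f) x :=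
    ((hf.contDiffAt (Icc_mem_nhds hx.1 hx.2)).derivWithin (m := 1) le_rfl).differentiableAt
      one_ne_zero
  rw [iteratedDeriv_succ, iteratedDeriv_one]
  exact hf'.hasDerivAt.congr_of_eventuallyEq hderiv

theorem hasDerivAt_exp_mul {ν : ℂ} {κ : ℝ → ℝ} {φ : ℝ → ℂ} {x κ₁ : ℝ} {φ₁ : ℂ}
    (hκ : HasDerivAt κ κ₁ x) (hφ : HasDerivAt φ φ₁ x) :
    HasDerivAt (fun y => exp (ν * κ y) * φ y)
      (ν * κ₁ * (exp (ν * κ x) * φ x) + exp (ν * κ x) * φ₁) x := by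
  refine ((hκ.ofReal_comp.const_mul ν).cexp.mul hφ).congr_deriv ?_
  ring

theorem hasDerivAt_deriv_exp_mul {ν lam : ℂ} {κ κ₁ : ℝ → ℝ} {φ φ₁ : ℝ → ℂ} {x κ₂ Q : ℝ}
    (hκ : HasDerivAt κ (κ₁ x) x) (hκ₁ : HasDerivAt κ₁ κ₂ x)
    (hφ : HasDerivAt φ (φ₁ x) x) (hφ₁ : HasDerivAt φ₁ ((ν ^ 2 * Q - lam) * φ x) x) :
    HasDerivAt (fun y => ν * κ₁ y * (exp (ν * κ y) * φ y) + exp (ν * κ y) * φ₁ y)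
      (ν * κ₂ * (exp (ν * κ x) * φ x)
        + 2 * ν * κ₁ x * (ν * κ₁ x * (exp (ν * κ x) * φ x) + exp (ν * κ x) * φ₁ x)
        + (ν ^ 2 * (Q - κ₁ x ^ 2) - lam) * (exp (ν * κ x) * φ x)) x := by
  refine (((hκ₁.ofReal_comp.const_mul ν).mul (hasDerivAt_exp_mul hκ hφ)).add
    ((hκ.ofReal_comp.const_mul ν).cexp.mul hφ₁)).congr_deriv ?_
  ring

theorem Complex.exp_neg_arg_mul_I_mul_self (ν : ℂ) : exp (-(arg ν : ℂ) * I) * ν = ‖ν‖ := by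
  calc exp (-(arg ν : ℂ) * I) * ν = exp (-(arg ν : ℂ) * I) * (‖ν‖ * exp (arg ν * I)) := by
        rw [norm_mul_exp_arg_mul_I]
    _ = ‖ν‖ := by rw [mul_left_comm, ← exp_add, neg_mul, neg_add_cancel, exp_zero, mul_one]

theorem Complex.re_exp_neg_arg_mul_I (ν : ℂ) :
    (exp (-(arg ν : ℂ) * I)).re = Real.cos (arg ν) := by
  rw [← ofReal_neg, exp_ofReal_mul_I_re, Real.cos_neg]

theorem Complex.cos_arg_pos {ν : ℂ} (hν : 0 < ν.re) : 0 < Real.cos (arg ν) := by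
  have hν0 : ν ≠ 0 := fun h => by simp [h] at hν
  rw [cos_arg hν0]
  exact div_pos hν (norm_pos_iff.mpr hν0)

noncomputable def agmonFlux (ν : ℂ) (k₁ : ℝ → ℝ) (w w₁ : ℝ → ℂ) (x : ℝ) : ℝ :=
  (exp (-(arg ν : ℂ) * I) * w₁ x * conj (w x)).re - ‖ν‖ * k₁ x * ‖w x‖ ^ 2

theorem hasDerivAt_agmonFlux {ν lam : ℂ} {k₁ : ℝ → ℝ} {w w₁ : ℝ → ℂ} {x k₂ Q : ℝ}
    (hk₁ : HasDerivAt k₁ k₂ x) (hw : HasDerivAt w (w₁ x) x)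
    (hw₁ : HasDerivAt w₁
      (ν * k₂ * w x + 2 * ν * k₁ x * w₁ x + (ν ^ 2 * (Q - k₁ x ^ 2) - lam) * w x) x) :
    HasDerivAt (agmonFlux ν k₁ w w₁)
      (Real.cos (arg ν) * ‖w₁ x‖ ^ 2
        + (‖ν‖ * ν.re * (Q - k₁ x ^ 2) - (exp (-(arg ν : ℂ) * I) * lam).re) * ‖w x‖ ^ 2) x := by
  set e := exp (-(arg ν : ℂ) * I)
  have he : e * ν = ‖ν‖ := exp_neg_arg_mul_I_mul_self ν
  have hc : e.re = Real.cos (arg ν) := re_exp_neg_arg_mul_I ν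
  have hre := reCLM.hasFDerivAt.comp_hasDerivAt x ((hw₁.const_mul e).mul hw.star)
  refine (hre.sub ((hk₁.const_mul ‖ν‖).mul hw.norm_sq)).congr_deriv ?_
  have hrot : e * (ν * k₂ * w x + 2 * ν * k₁ x * w₁ x + (ν ^ 2 * (Q - k₁ x ^ 2) - lam) * w x)
      = ‖ν‖ * k₂ * w x + 2 * ‖ν‖ * k₁ x * w₁ x + (‖ν‖ * ν * (Q - k₁ x ^ 2) - e * lam) * w x := by
    linear_combination (k₂ * w x + 2 * k₁ x * w₁ x + ν * (Q - k₁ x ^ 2) * w x) * he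
  rw [reCLM_apply, hrot, Complex.inner, ← hc]
  simp only [Complex.sq_norm, normSq_apply]
  simp only [star_def, add_re, sub_re, mul_re, mul_im, add_im, sub_im,
    ofReal_re, ofReal_im, conj_re, conj_im, sq, re_ofNat, im_ofNat]
  ring

theorem agmon_identity {a b : ℝ} (hab : a ≤ b) {ν lam : ℂ} (hν : 0 < ν.re)
    {Q k₁ k₂ : ℝ → ℝ} {w w₁ : ℝ → ℂ}
    (hQ : ContinuousOn Q (Icc a b)) (hk₁ : ContinuousOn k₁ (Icc a b))
    (hw : ContinuousOn w (Icc a b)) (hw₁ : ContinuousOn w₁ (Icc a b))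
    (hwa : w a = 0) (hwb : w b = 0)
    (hk₁' : ∀ x ∈ Ioo a b, HasDerivAt k₁ (k₂ x) x)
    (hw' : ∀ x ∈ Ioo a b, HasDerivAt w (w₁ x) x)
    (hw₁' : ∀ x ∈ Ioo a b, HasDerivAt w₁
      (ν * k₂ x * w x + 2 * ν * k₁ x * w₁ x + (ν ^ 2 * (Q x - k₁ x ^ 2) - lam) * w x) x) :
    (∫ x in a..b, ‖w₁ x‖ ^ 2) + ∫ x in a..b,
      (‖ν‖ ^ 2 * (Q x - k₁ x ^ 2) - (exp (-(arg ν : ℂ) * I) * lam).re / Real.cos (arg ν))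
        * ‖w x‖ ^ 2 = 0 := by
  set c := Real.cos (arg ν)
  set μ := (exp (-(arg ν : ℂ) * I) * lam).re / c
  have hc : 0 < c := cos_arg_pos hν
  have hflux : ContinuousOn (agmonFlux ν k₁ w w₁) (Icc a b) := by
    unfold agmonFlux; fun_prop
  have hint :
      ∫ x in a..b, c * (‖w₁ x‖ ^ 2 + (‖ν‖ ^ 2 * (Q x - k₁ x ^ 2) - μ) * ‖w x‖ ^ 2) = 0 := by
    have hcν : ‖ν‖ * c = ν.re := norm_mul_cos_arg ν
    have hderiv : ∀ x ∈ Ioo a b, HasDerivAt (agmonFlux ν k₁ w w₁)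
        (c * (‖w₁ x‖ ^ 2 + (‖ν‖ ^ 2 * (Q x - k₁ x ^ 2) - μ) * ‖w x‖ ^ 2)) x := by
      intro x hx
      refine (hasDerivAt_agmonFlux (hk₁' x hx) (hw' x hx) (hw₁' x hx)).congr_deriv ?_
      simp only [μ]
      field_simp
      linear_combination (‖ν‖ * (Q x - k₁ x ^ 2) * ‖w x‖ ^ 2) * hcν.symm
    have hderiv_int : IntervalIntegrable
        (fun x => c * (‖w₁ x‖ ^ 2 + (‖ν‖ ^ 2 * (Q x - k₁ x ^ 2) - μ) * ‖w x‖ ^ 2)) volume a b :=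
      ContinuousOn.intervalIntegrable_of_Icc hab (by fun_prop)
    rw [intervalIntegral.integral_eq_sub_of_hasDerivAt_of_le hab hflux hderiv hderiv_int]
    simp [agmonFlux, hwa, hwb]
  rw [intervalIntegral.integral_const_mul, mul_eq_zero, or_iff_right hc.ne'] at hint
  rw [← hint, intervalIntegral.integral_add]
  · exact ContinuousOn.intervalIntegrable_of_Icc hab (by fun_prop)
  · exact ContinuousOn.intervalIntegrable_of_Icc hab (by fun_prop)

/-- Agmon equality: if `Re ν > 0`, `θ = arg ν`, `I = (a,b)` is a bounded
interval, `q` continuous, and `φ` (vanishing at the endpoints) solves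
`-φ'' + ν² q² φ = λ φ` on `I`, then with `κ ∈ C²(I;ℝ)`, `w = e^{νκ} φ` and
`μ = Re(e^{-iθ}λ)/cos θ`, one has
`‖w'‖²_{L²(I)} + ∫_I (|ν|²(q² - κ'²) - μ)|w|² = 0`. -/
theorem stmt7 (a b : ℝ) (hab : a < b) (q : ℝ → ℝ)
    (hq : ContinuousOn q (Set.Icc a b))
    (ν lam : ℂ) (hν : 0 < ν.re)
    (φ : ℝ → ℂ) (hφ : ContDiffOn ℝ 2 φ (Set.Icc a b))
    (hφa : φ a = 0) (hφb : φ b = 0)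
    (heq : ∀ x ∈ Set.Ioo a b,
      -(iteratedDeriv 2 φ x) + ν ^ 2 * (q x : ℂ) ^ 2 * φ x = lam * φ x)
    (κ : ℝ → ℝ) (hκ : ContDiffOn ℝ 2 κ (Set.Icc a b)) :
    (∫ x in a..b,
        ‖deriv (fun s => Complex.exp (ν * (κ s : ℂ)) * φ s) x‖ ^ 2)
      + (∫ x in a..b,
          (‖ν‖ ^ 2 * ((q x) ^ 2 - (deriv κ x) ^ 2)
              - (Complex.exp (-(ν.arg : ℂ) * Complex.I) * lam).re / Real.cos ν.arg)
            * ‖Complex.exp (ν * (κ x : ℂ)) * φ x‖ ^ 2) = 0 := by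
  -- One-sided derivatives at the endpoints make `φ'` and `κ'` continuous on the closed interval.
  set φ₁ := derivWithin φ (Icc a b)
  set κ₁ := derivWithin κ (Icc a b)
  set w : ℝ → ℂ := fun s => exp (ν * κ s) * φ s
  set w₁ : ℝ → ℂ := fun s => ν * κ₁ s * w s + exp (ν * κ s) * φ₁ s
  have hκ' : ∀ x ∈ Ioo a b, HasDerivAt κ (κ₁ x) x := fun x hx =>
    hκ.hasDerivAt_Icc two_ne_zero hx
  have hw' : ∀ x ∈ Ioo a b, HasDerivAt w (w₁ x) x := fun x hx =>
    hasDerivAt_exp_mul (hκ' x hx) (hφ.hasDerivAt_Icc two_ne_zero hx)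
  have hφ₁' : ∀ x ∈ Ioo a b, HasDerivAt φ₁ ((ν ^ 2 * (q x ^ 2 : ℝ) - lam) * φ x) x := by
    intro x hx
    refine (hφ.hasDerivAt_derivWithin_Icc hx).congr_deriv ?_
    push_cast
    linear_combination -heq x hx
  have hκ₁c : ContinuousOn κ₁ (Icc a b) :=
    hκ.continuousOn_derivWithin (uniqueDiffOn_Icc hab) one_le_two
  have hφ₁c : ContinuousOn φ₁ (Icc a b) :=
    hφ.continuousOn_derivWithin (uniqueDiffOn_Icc hab) one_le_two
  have hκc := hκ.continuousOn
  have hφc := hφ.continuousOn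
  have hidentity := agmon_identity hab.le hν (Q := fun x => q x ^ 2) (k₂ := iteratedDeriv 2 κ)
    (by fun_prop) hκ₁c (by simp only [w]; fun_prop) (by simp only [w₁, w]; fun_prop)
    (by simp [w, hφa]) (by simp [w, hφb]) (fun x hx => hκ.hasDerivAt_derivWithin_Icc hx) hw'
    (fun x hx => hasDerivAt_deriv_exp_mul (hκ' x hx) (hκ.hasDerivAt_derivWithin_Icc hx)
      (hφ.hasDerivAt_Icc two_ne_zero hx) (hφ₁' x hx))
  rw [← hidentity]
  congr 1 <;> refine intervalIntegral.integral_congr_Ioo_of_le hab.le fun x hx => ?_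
  · rw [(hw' x hx).deriv]
  · rw [(hκ' x hx).deriv]
end

section
/- Let β ∈ ℂ with Re(β) > 0. The span of the family (φ_{β,k})_{k≥1}, where φ_{β,k}(x) = He_{k−1}(√β x)e^{−βx²/2}, is dense in L²(ℝ). Equivalently, if u ∈ L²(ℝ) satisfies ∫_ℝ u(x) p(√β x) e^{−βx²/2} dx = 0 for all polynomials p, then u = 0 almost everywhere. -/
/-!
Put `g(x) = u(x) e^{-βx²/2}`. Since `u ∈ L²` and the Gaussian factor decays faster than any
exponential, `e^{c|x|} g` is integrable for every real `c` (Cauchy–Schwarz). Taking `p = Xⁿ`, the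
hypothesis says that all moments of `g` vanish. The exponential moments let us expand `e^{zx}` in
its power series under the integral, so the two-sided Laplace transform `∫ g(x) e^{zx} dx` vanishes
for all `z ∈ ℂ`; in particular the Fourier transform of `g` vanishes, and then `g = 0` a.e. by
Fourier injectivity on `L¹`. Since the Gaussian factor has no zeros, `u = 0` a.e.
-/

open MeasureTheory FourierTransform SchwartzMap Nat

theorem ae_eq_zero_of_fourier_eq_zero {V F : Type*} [NormedAddCommGroup V] [InnerProductSpace ℝ V]
    [FiniteDimensional ℝ V] [MeasurableSpace V] [BorelSpace V]
    [NormedAddCommGroup F] [NormedSpace ℂ F] [CompleteSpace F]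
    {g : V → F} (hg : Integrable g) (hFg : 𝓕 g = 0) : g =ᵐ[volume] 0 := by
  refine ae_eq_zero_of_integral_contDiff_smul_eq_zero hg.locallyIntegrable fun θ hθ hθc => ?_
  -- The test function `θ` is the Fourier transform of a Schwartz function, and `𝓕` is self-adjoint.
  let q : 𝓢(V, ℂ) := HasCompactSupport.toSchwartzMap (f := Complex.ofRealCLM ∘ θ)
    (hθc.comp_left rfl) (by fun_prop)
  calc ∫ x, θ x • g x = ∫ x, 𝓕 (⇑(𝓕⁻ q : 𝓢(V, ℂ))) x • g x := by
        rw [← fourier_coe, fourier_fourierInv_eq]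
        simp [q]
    _ = ∫ x, (𝓕⁻ q : 𝓢(V, ℂ)) x • 𝓕 g x := by
        simpa using! VectorFourier.integral_fourierIntegral_smul_eq_flip (L := innerₗ V)
          Real.continuous_fourierChar continuous_inner (𝓕⁻ q : 𝓢(V, ℂ)).integrable hg
    _ = 0 := by simp [hFg]

theorem hasSum_integral_mul_cexp {g : ℝ → ℂ} (hg : AEStronglyMeasurable g)
    (hexp : ∀ c : ℝ, Integrable fun x => Real.exp (c * |x|) * ‖g x‖) (z : ℂ) :
    HasSum (fun n : ℕ => z ^ n / n ! * ∫ x, g x * (x : ℂ) ^ n)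
      (∫ x, g x * Complex.exp (z * x)) := by
  simp_rw [← integral_const_mul]
  refine hasSum_integral_of_dominated_convergence
    (fun n x => ‖g x‖ * ((‖z‖ * |x|) ^ n / n !)) (fun n => ?_) (fun n => ?_) ?_ ?_ ?_
  · exact (hg.mul (Complex.continuous_ofReal.pow n).aestronglyMeasurable).const_mul _
  · refine ae_of_all _ fun x => le_of_eq ?_
    simp only [norm_mul, norm_div, norm_pow, Complex.norm_natCast, Complex.norm_real,
      Real.norm_eq_abs, mul_pow]
    ring
  · exact ae_of_all _ fun x => (Real.summable_pow_div_factorial _).mul_left _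
  · refine (hexp ‖z‖).congr (ae_of_all _ fun x => ?_)
    have hs := NormedSpace.expSeries_div_hasSum_exp (‖z‖ * |x|)
    rw [← Real.exp_eq_exp_ℝ] at hs
    dsimp only
    rw [(hs.mul_left ‖g x‖).tsum_eq, mul_comm]
  · refine ae_of_all _ fun x => ?_
    have hs := (NormedSpace.expSeries_div_hasSum_exp (z * x)).mul_left (g x)
    rw [← Complex.exp_eq_exp_ℂ] at hs
    have hterm (n : ℕ) : z ^ n / n ! * (g x * (x : ℂ) ^ n) = g x * ((z * x) ^ n / n !) := by
      ring
    simpa only [hterm] using hs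

theorem fourier_eq_zero_of_moments_eq_zero {g : ℝ → ℂ} (hg : AEStronglyMeasurable g)
    (hexp : ∀ c : ℝ, Integrable fun x => Real.exp (c * |x|) * ‖g x‖)
    (hmom : ∀ n : ℕ, ∫ x, g x * (x : ℂ) ^ n = 0) : 𝓕 g = 0 := by
  ext ξ
  have hlaplace := hasSum_integral_mul_cexp hg hexp (-2 * Real.pi * ξ * Complex.I)
  simp only [hmom, mul_zero] at hlaplace
  rw [Real.fourier_real_eq_integral_exp_smul, Pi.zero_apply, hasSum_zero.unique hlaplace]
  congr 1 with x
  rw [smul_eq_mul, mul_comm]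
  push_cast
  ring_nf

lemma norm_cexp_neg_mul_sq_div_two (β : ℂ) (x : ℝ) :
    ‖Complex.exp (-β * (x : ℂ) ^ 2 / 2)‖ = Real.exp (-(β.re * x ^ 2) / 2) := by
  have h : -β * (x : ℂ) ^ 2 / 2 = ((-x ^ 2 / 2 : ℝ) : ℂ) * β := by push_cast; ring
  rw [Complex.norm_exp, h, Complex.re_ofReal_mul]
  ring_nf

lemma memLp_two_exp_mul_abs_sub_mul_sq {a : ℝ} (ha : 0 < a) (c : ℝ) :
    MemLp (fun x : ℝ => Real.exp (c * |x| - a * x ^ 2 / 2)) 2 volume := by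
  have hcont : Continuous fun x : ℝ => Real.exp (c * |x| - a * x ^ 2 / 2) := by fun_prop
  rw [memLp_two_iff_integrable_sq_norm hcont.aestronglyMeasurable]
  refine ((integrable_exp_neg_mul_sq (half_pos ha)).const_mul (Real.exp (2 * c ^ 2 / a))).mono'
    (by fun_prop : Continuous _).aestronglyMeasurable (ae_of_all _ fun x => ?_)
  have hsq : 2 * c * |x| - a * x ^ 2 / 2 ≤ 2 * c ^ 2 / a := by
    rw [le_div_iff₀ ha, ← sq_abs x]
    nlinarith [sq_nonneg (a * |x| - 2 * c)]
  rw [Real.norm_eq_abs, Real.norm_eq_abs, abs_of_nonneg (by positivity),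
    abs_of_nonneg (by positivity), ← Real.exp_nat_mul, ← Real.exp_add, Real.exp_le_exp]
  push_cast
  linarith

lemma integrable_exp_mul_abs_mul_norm_mul_cexp {u : ℝ → ℂ} (hu : MemLp u 2 volume) {β : ℂ}
    (hβ : 0 < β.re) (c : ℝ) :
    Integrable fun x : ℝ => Real.exp (c * |x|) * ‖u x * Complex.exp (-β * (x : ℂ) ^ 2 / 2)‖ := by
  have h := (memLp_one_iff_integrable.1 (hu.smul (memLp_two_exp_mul_abs_sub_mul_sq hβ c))).norm
  refine h.congr (ae_of_all _ fun x => ?_)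
  simp only [Pi.smul_apply', norm_smul, norm_mul, Real.norm_eq_abs, Real.abs_exp,
    norm_cexp_neg_mul_sq_div_two]
  rw [sub_eq_add_neg, Real.exp_add, neg_div]
  ring

/-- Completeness of the Davies eigenfunctions: for `Re β > 0`, if `u ∈ L²(ℝ)`
satisfies `∫ u(x) p(√β x) e^{-β x²/2} dx = 0` for every polynomial `p`, then
`u = 0` almost everywhere. -/
theorem stmt13 (β : ℂ) (hβ : 0 < β.re) (u : ℝ → ℂ)
    (hu : MemLp u 2 (volume : Measure ℝ))
    (h : ∀ p : Polynomial ℂ,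
      ∫ x : ℝ, u x * p.eval (β ^ ((1 : ℂ) / 2) * (x : ℂ)) *
        Complex.exp (-β * (x : ℂ) ^ 2 / 2) = 0) :
    u =ᵐ[volume] 0 := by
  set g : ℝ → ℂ := fun x => u x * Complex.exp (-β * (x : ℂ) ^ 2 / 2)
  have hg_meas : AEStronglyMeasurable g :=
    hu.1.mul (by fun_prop : Continuous fun x : ℝ => _).aestronglyMeasurable
  have hg_exp := integrable_exp_mul_abs_mul_norm_mul_cexp hu hβ
  have hg_int : Integrable g := (integrable_norm_iff hg_meas).1 <| by
    simpa only [zero_mul, Real.exp_zero, one_mul] using hg_exp 0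
  have hmom (n : ℕ) : ∫ x, g x * (x : ℂ) ^ n = 0 := by
    have hs : β ^ ((1 : ℂ) / 2) ≠ 0 := by
      rw [Ne, Complex.cpow_eq_zero_iff]
      exact fun h0 => hβ.ne' (by simp [h0.1])
    have hn := h (Polynomial.X ^ n)
    simp only [Polynomial.eval_pow, Polynomial.eval_X] at hn
    have hrw : (fun x : ℝ => u x * (β ^ ((1 : ℂ) / 2) * x) ^ n * Complex.exp (-β * x ^ 2 / 2)) =
        fun x => (β ^ ((1 : ℂ) / 2)) ^ n * (g x * (x : ℂ) ^ n) := by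
      ext x; simp only [g]; ring
    rw [hrw, integral_const_mul] at hn
    exact (mul_eq_zero.1 hn).resolve_left (pow_ne_zero n hs)
  filter_upwards [ae_eq_zero_of_fourier_eq_zero hg_int
    (fourier_eq_zero_of_moments_eq_zero hg_meas hg_exp hmom)] with x hx
  simpa [g] using hx
end

section
/- Let γ : 𝕋 → ℂ be holomorphic on an open set Ω ⊂ ℂ containing [n₀, ∞) ⊂ ℝ for some n₀ ∈ ℕ, and suppose γ has sub-exponential growth on [n₀,∞): for every δ > 0, sup_{t ≥ n₀} |γ(t)| e^{−δt} < ∞. Define the diagonal operator Op(γ) on polynomials p(z) = Σ_{n ≥ n₀} aₙ zⁿ by Op(γ)(p)(z) = Σ_{n ≥ n₀} γ(n) aₙ zⁿ. Then for any 0 < r < R, there exists C > 0 such that for every such polynomial p, ‖Op(γ)(p)‖_{L^∞(D(0,r))} ≤ C ‖p‖_{L^∞(D(0,R))}. -/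
/-!
Cauchy's estimate on a circle of radius `ρ ∈ (r, R)` bounds the coefficients by `‖aₙ‖ ρⁿ ≤ B`.
Choosing `δ > 0` with `e^δ r < ρ`, the growth hypothesis gives `‖γ n‖ ≤ M e^{δ n}`, so the `n`-th
term of `Op(γ)(p)(z)` is at most `M B qⁿ` with `q = e^δ r / ρ < 1`, and the geometric series
bounds the sum uniformly in the degree of `p`.
-/

open Finset Polynomial Real

theorem Polynomial.iteratedDeriv_eval {𝕜 : Type*} [NontriviallyNormedField 𝕜] (p : 𝕜[X])
    (n : ℕ) : iteratedDeriv n (fun x => p.eval x) = fun x => (derivative^[n] p).eval x := by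
  induction n generalizing p with
  | zero => simp
  | succ n ih =>
    have hderiv : deriv (fun x => p.eval x) = fun x => p.derivative.eval x :=
      _root_.funext fun _ => p.deriv
    rw [iteratedDeriv_succ', hderiv, ih, Function.iterate_succ_apply]

theorem Polynomial.iteratedDeriv_eval_zero {𝕜 : Type*} [NontriviallyNormedField 𝕜] (p : 𝕜[X])
    (n : ℕ) : iteratedDeriv n (fun x => p.eval x) 0 = n.factorial * p.coeff n := by
  simp only [p.iteratedDeriv_eval, ← coeff_zero_eq_eval_zero, coeff_iterate_derivative, zero_add,
    Nat.descFactorial_self, nsmul_eq_mul]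

theorem Polynomial.norm_coeff_mul_pow_le {p : ℂ[X]} {ρ B : ℝ} (hρ : 0 < ρ)
    (hB : ∀ w ∈ Metric.sphere (0 : ℂ) ρ, ‖p.eval w‖ ≤ B) (n : ℕ) :
    ‖p.coeff n‖ * ρ ^ n ≤ B := by
  have hCauchy := Complex.norm_iteratedDeriv_le_of_forall_mem_sphere_norm_le n hρ
    p.differentiable.diffContOnCl hB
  rw [p.iteratedDeriv_eval_zero, norm_mul, Complex.norm_natCast, mul_div_assoc] at hCauchy
  rw [← le_div_iff₀ (by positivity)]
  exact le_of_mul_le_mul_left hCauchy (by positivity)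

theorem norm_sum_range_le_of_norm_le_geometric {E : Type*} [SeminormedAddCommGroup E]
    {f : ℕ → E} {K q : ℝ} (hK : 0 ≤ K) (hq₀ : 0 ≤ q) (hq₁ : q < 1)
    (hf : ∀ n, ‖f n‖ ≤ K * q ^ n) (N : ℕ) : ‖∑ n ∈ range N, f n‖ ≤ K / (1 - q) := by
  have hgeom : ∑ n ∈ range N, q ^ n ≤ 1 / (1 - q) := by
    rw [range_eq_Ico]
    simpa using geom_sum_Ico_le_of_lt_one (m := 0) (n := N) hq₀ hq₁
  calc ‖∑ n ∈ range N, f n‖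
      ≤ ∑ n ∈ range N, K * q ^ n := (norm_sum_le _ _).trans (sum_le_sum fun n _ => hf n)
    _ = K * ∑ n ∈ range N, q ^ n := (mul_sum _ _ _).symm
    _ ≤ K * (1 / (1 - q)) := by gcongr
    _ = K / (1 - q) := mul_one_div K (1 - q)

theorem exists_pos_exp_mul_lt {r ρ : ℝ} (hr : 0 < r) (hrρ : r < ρ) :
    ∃ δ > 0, exp δ * r < ρ := by
  have hlog : 0 < log (ρ / r) := log_pos ((one_lt_div hr).2 hrρ)
  refine ⟨log (ρ / r) / 2, half_pos hlog, ?_⟩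
  calc exp (log (ρ / r) / 2) * r < exp (log (ρ / r)) * r := by
        gcongr; linarith
    _ = ρ := by rw [exp_log (div_pos (hr.trans hrρ) hr), div_mul_cancel₀ _ hr.ne']

theorem le_mul_exp_pow_of_mul_exp_neg_le {x δ M : ℝ} {n : ℕ} (h : x * exp (-δ * n) ≤ M) :
    x ≤ M * exp δ ^ n := by
  rw [← exp_nat_mul]
  rwa [← le_div_iff₀ (exp_pos _), neg_mul, exp_neg, div_inv_eq_mul, mul_comm δ] at h

theorem stmt19_general (n₀ : ℕ) (γ : ℂ → ℂ)
    (hgrowth : ∀ δ : ℝ, 0 < δ → ∃ M : ℝ, ∀ t : ℝ, (n₀ : ℝ) ≤ t →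
      ‖γ (t : ℂ)‖ * Real.exp (-δ * t) ≤ M)
    (r R : ℝ) (hr : 0 < r) (hrR : r < R) :
    ∃ C > (0 : ℝ), ∀ p : Polynomial ℂ, (∀ n < n₀, p.coeff n = 0) →
      ∀ B : ℝ, (∀ w : ℂ, ‖w‖ < R → ‖p.eval w‖ ≤ B) →
      ∀ z : ℂ, ‖z‖ < r →
        ‖∑ n ∈ Finset.range (p.natDegree + 1),
          γ (n : ℂ) * p.coeff n * z ^ n‖ ≤ C * B := by
  obtain ⟨ρ, hrρ, hρR⟩ := exists_between hrR
  have hρ : 0 < ρ := hr.trans hrρ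
  obtain ⟨δ, hδ, hδρ⟩ := exists_pos_exp_mul_lt hr hrρ
  obtain ⟨M, hM⟩ := hgrowth δ hδ
  set q := exp δ * r / ρ
  have hq₁ : q < 1 := (div_lt_one hρ).2 hδρ
  refine ⟨max M 1 / (1 - q), div_pos (by positivity) (sub_pos.2 hq₁), ?_⟩
  intro p hp B hB z hz
  have hB₀ : 0 ≤ B := (norm_nonneg _).trans (hB 0 (by simpa using hr.trans hrR))
  have hcoeff := p.norm_coeff_mul_pow_le hρ fun w hw =>
    hB w ((mem_sphere_zero_iff_norm.1 hw).trans_lt hρR)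
  have hterm : ∀ n : ℕ, ‖γ n * p.coeff n * z ^ n‖ ≤ max M 1 * B * q ^ n := by
    intro n
    rcases lt_or_ge n n₀ with hn | hn
    · simp only [hp n hn, mul_zero, zero_mul, norm_zero]
      positivity
    have hγn : ‖γ n‖ ≤ max M 1 * exp δ ^ n :=
      (le_mul_exp_pow_of_mul_exp_neg_le (by simpa using hM n (by exact_mod_cast hn))).trans
        (by gcongr; exact le_max_left M 1)
    calc ‖γ n * p.coeff n * z ^ n‖ = ‖γ n‖ * ‖p.coeff n‖ * ‖z‖ ^ n := by
          rw [norm_mul, norm_mul, norm_pow]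
      _ ≤ max M 1 * exp δ ^ n * ‖p.coeff n‖ * r ^ n := by gcongr
      _ = max M 1 * (‖p.coeff n‖ * ρ ^ n) * q ^ n := by
          simp only [q, div_pow, mul_pow]; field_simp
      _ ≤ max M 1 * B * q ^ n := by gcongr; exact hcoeff n
  calc _ ≤ max M 1 * B / (1 - q) :=
        norm_sum_range_le_of_norm_le_geometric (by positivity) (by positivity) hq₁ hterm _
    _ = max M 1 / (1 - q) * B := by ring

/-- Diagonal ("pseudo-differential") multiplier estimate on polynomials: if
`γ` is holomorphic on an open set `Ω` containing `[n₀, ∞)` and has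
sub-exponential growth there, then for `0 < r < R` there is `C > 0` such that
for every polynomial `p = Σ_{n ≥ n₀} aₙ zⁿ`,
`‖Op(γ)(p)‖_{L^∞(D(0,r))} ≤ C ‖p‖_{L^∞(D(0,R))}`, where
`Op(γ)(p)(z) = Σ_{n ≥ n₀} γ(n) aₙ zⁿ`. -/
theorem stmt19 (n₀ : ℕ) (Ω : Set ℂ) (hΩ : IsOpen Ω)
    (hΩ2 : ∀ t : ℝ, (n₀ : ℝ) ≤ t → (t : ℂ) ∈ Ω)
    (γ : ℂ → ℂ) (hγ : DifferentiableOn ℂ γ Ω)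
    (hgrowth : ∀ δ : ℝ, 0 < δ → ∃ M : ℝ, ∀ t : ℝ, (n₀ : ℝ) ≤ t →
      ‖γ (t : ℂ)‖ * Real.exp (-δ * t) ≤ M)
    (r R : ℝ) (hr : 0 < r) (hrR : r < R) :
    ∃ C > (0 : ℝ), ∀ p : Polynomial ℂ, (∀ n < n₀, p.coeff n = 0) →
      ∀ B : ℝ, (∀ w : ℂ, ‖w‖ < R → ‖p.eval w‖ ≤ B) →
      ∀ z : ℂ, ‖z‖ < r →
        ‖∑ n ∈ Finset.range (p.natDegree + 1),
          γ (n : ℂ) * p.coeff n * z ^ n‖ ≤ C * B :=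
  stmt19_general n₀ γ hgrowth r R hr hrR
end
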